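/- Let q ∈ MvPolynomial (Fin n) (ZMod 2) be a quadratic form. Let e ∈ ℕ, let s be a nonempty finite set of natural numbers, and let f : ℕ → ℕ satisfy f i ≥ 1 for every i ∈ s. Then q^e · ∏_{i ∈ s} (D_i q)^(f i) = 0 if and only if there exists a linear form ℓ with q = ℓ². (This computes the kernel of the natural transformation S²(V♯) → S^p(V♯) induced by any nontrivial monomial in the generators ι₂, Q_i(ι₂) of H*(K(F₂,2)) that involves at least one Milnor operation Q_i: the kernel consists exactly of the squares of linear forms, i.e. the subfunctor generated by ⟨u²⟩.) -/

import Mathlib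

/-!
Every derivation kills squares in characteristic 2, so squares of linear forms lie in the kernel.
Conversely, a product in the domain `F₂[x]` vanishes only if `q = 0` or some `Q_i q = 0`. Writing
`Q_i = ∑ⱼ xⱼ ^ N • ∂ⱼ` with `N = 2 ^ (i + 1) ≥ 2`, the coefficient of `xⱼ ^ N xₖ` in `Q_i q` is the
coefficient of `xₖ` in `∂ⱼ q`, i.e. the coefficient of `xⱼ xₖ` in `q`. Hence `Q_i q = 0` forces `q`
to have no mixed terms, so `q = ∑ⱼ aⱼ xⱼ² = (∑ⱼ aⱼ xⱼ)²` by Frobenius over `F₂`.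
-/

open MvPolynomial

/-- The Milnor operation `Q_i` acting on `F₂[x₁,…,xₙ]` as the `F₂`-linear derivation
with `D_i (x_j) = x_j ^ (2^(i+1))`. -/
noncomputable def milnorQ (n i : ℕ) :
    Derivation (ZMod 2) (MvPolynomial (Fin n) (ZMod 2)) (MvPolynomial (Fin n) (ZMod 2)) :=
  MvPolynomial.mkDerivation (ZMod 2) fun j => X j ^ 2 ^ (i + 1)

theorem Finsupp.exists_eq_single_add_single_of_degree_eq_two {σ : Type*} {m : σ →₀ ℕ}
    (h : m.degree = 2) : ∃ j k, m = single j 1 + single k 1 := by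
  classical
  obtain ⟨j, k, hjk⟩ := Multiset.card_eq_two.1 ((card_toMultiset m).trans h)
  refine ⟨j, k, ?_⟩
  rw [toMultiset_eq_iff.1 hjk, Multiset.insert_eq_cons, ← Multiset.singleton_add,
    Multiset.toFinsupp_add, Multiset.toFinsupp_singleton, Multiset.toFinsupp_singleton]

namespace Derivation

variable {R A : Type*} [CommSemiring R] [CommSemiring A] [Algebra R A]

theorem finset_sum_apply {ι : Type*} (s : Finset ι) (D : ι → Derivation R A A) (a : A) :
    (∑ i ∈ s, D i) a = ∑ i ∈ s, D i a := by
  rw [← coeFnAddMonoidHom_apply, map_sum, Finset.sum_apply]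
  rfl

theorem map_sq_eq_zero [CharP A 2] (D : Derivation R A A) (a : A) : D (a ^ 2) = 0 := by
  rw [D.leibniz_pow, smul_eq_mul, two_nsmul, CharTwo.add_self_eq_zero]

end Derivation

namespace MvPolynomial

variable {R σ : Type*} [CommSemiring R] [Fintype σ]

theorem mkDerivation_apply_eq_sum_pderiv (f : σ → MvPolynomial σ R) (p : MvPolynomial σ R) :
    mkDerivation R f p = ∑ j, f j * pderiv j p := by
  classical
  have hD : mkDerivation R f = ∑ j, f j • pderiv j :=
    derivation_ext fun k => by
      simp [Derivation.finset_sum_apply, mkDerivation_X, pderiv_X, Pi.single_apply]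
  simp [hD, Derivation.finset_sum_apply]

theorem coeff_single_add_single_sum_X_pow_mul {N : ℕ} (hN : 1 < N)
    (p : σ → MvPolynomial σ R) (j k : σ) :
    coeff (Finsupp.single j N + Finsupp.single k 1) (∑ j', X j' ^ N * p j') =
      coeff (Finsupp.single k 1) (p j) := by
  classical
  rw [coeff_sum, Finset.sum_eq_single j]
  · rw [X_pow_eq_monomial, coeff_monomial_mul', if_pos le_self_add, one_mul,
      add_tsub_cancel_left]
  · intro j' _ hj'
    rw [X_pow_eq_monomial, coeff_monomial_mul', if_neg]
    intro hle
    have hle' := hle j'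
    simp only [Finsupp.single_eq_same, Finsupp.add_apply, Finsupp.single_eq_of_ne hj',
      Finsupp.single_apply] at hle'
    split_ifs at hle' <;> omega
  · simp

theorem coeff_single_add_single_eq_zero_of_mkDerivation_eq_zero {N : ℕ} (hN : 1 < N)
    {q : MvPolynomial σ R} (hq : mkDerivation R (fun j => (X j : MvPolynomial σ R) ^ N) q = 0)
    {j k : σ} (hjk : j ≠ k) : coeff (Finsupp.single j 1 + Finsupp.single k 1) q = 0 := by
  have hcoeff := coeff_single_add_single_sum_X_pow_mul hN (fun j => pderiv j q) j k
  rw [← mkDerivation_apply_eq_sum_pderiv, hq, coeff_zero, coeff_pderiv] at hcoeff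
  simpa [Finsupp.single_eq_of_ne hjk, add_comm] using hcoeff.symm

theorem exists_isHomogeneous_one_eq_sq {q : MvPolynomial σ (ZMod 2)} (hq : q.IsHomogeneous 2)
    (hmixed : ∀ j k, j ≠ k → coeff (Finsupp.single j 1 + Finsupp.single k 1) q = 0) :
    ∃ ℓ : MvPolynomial σ (ZMod 2), ℓ.IsHomogeneous 1 ∧ q = ℓ ^ 2 := by
  classical
  refine ⟨∑ j, C (coeff (Finsupp.single j 2) q) * X j,
    IsHomogeneous.sum _ _ _ fun j _ => isHomogeneous_C_mul_X _ _, ?_⟩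
  rw [← expand_zmod]
  simp only [map_sum, map_mul, expand_C, expand_X]
  ext m
  simp only [coeff_sum, coeff_C_mul, coeff_X_pow, mul_ite, mul_one, mul_zero]
  by_cases hm : m.degree = 2
  · obtain ⟨j, k, rfl⟩ := Finsupp.exists_eq_single_add_single_of_degree_eq_two hm
    rcases eq_or_ne j k with rfl | hjk
    · simp [← Finsupp.single_add, Finsupp.single_left_inj two_ne_zero]
    · rw [hmixed j k hjk, Finset.sum_eq_zero]
      rintro j' -
      rw [if_neg]
      intro h
      have hj : Finsupp.single j' 2 j = 1 := by simpa [hjk.symm] using DFunLike.congr_fun h j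
      rcases eq_or_ne j' j with rfl | hj'
      · simp at hj
      · simp [Finsupp.single_eq_of_ne hj'.symm] at hj
  · rw [hq.coeff_eq_zero hm, Finset.sum_eq_zero]
    rintro j -
    rw [if_neg]
    rintro rfl
    exact hm (Finsupp.degree_single j 2)

end MvPolynomial

theorem kernel_of_monomial_with_Milnor {n : ℕ}
    (q : MvPolynomial (Fin n) (ZMod 2)) (hq : q.IsHomogeneous 2)
    (e : ℕ) (s : Finset ℕ) (hs : s.Nonempty) (f : ℕ → ℕ) (hf : ∀ i ∈ s, 1 ≤ f i) :
    q ^ e * ∏ i ∈ s, (milnorQ n i q) ^ f i = 0 ↔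
      ∃ ℓ : MvPolynomial (Fin n) (ZMod 2), ℓ.IsHomogeneous 1 ∧ q = ℓ ^ 2 := by
  constructor
  · intro h
    rcases mul_eq_zero.1 h with hqe | hprod
    · exact ⟨0, isHomogeneous_zero _ _ _, by rw [(pow_eq_zero_iff'.1 hqe).1, zero_pow two_ne_zero]⟩
    · obtain ⟨i, -, hi⟩ := Finset.prod_eq_zero_iff.1 hprod
      have hQ : milnorQ n i q = 0 := (pow_eq_zero_iff'.1 hi).1
      exact exists_isHomogeneous_one_eq_sq hq fun j k hjk =>
        coeff_single_add_single_eq_zero_of_mkDerivation_eq_zero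
          (Nat.one_lt_two_pow (Nat.succ_ne_zero i)) hQ hjk
  · rintro ⟨ℓ, -, rfl⟩
    obtain ⟨i, hi⟩ := hs
    have hfactor : milnorQ n i (ℓ ^ 2) ^ f i = 0 := by
      rw [Derivation.map_sq_eq_zero, zero_pow (Nat.one_le_iff_ne_zero.1 (hf i hi))]
    rw [Finset.prod_eq_zero hi hfactor, mul_zero]
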